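/- Let α be irrational, γ > 0, τ > 1, and θ ∈ Θ_γ^τ. Then θ is Θ_{γ/100}^{100τ}-homogeneous: for all sufficiently small σ > 0, the Lebesgue measure of (θ - σ, θ + σ) ∩ Θ_{γ/100}^{100τ} is at least σ. -/

import Mathlib

open MeasureTheory Set

/-- Distance from a real number to the nearest integer, i.e. `‖x‖_{ℝ/ℤ}`. -/
noncomputable def distZ (x : ℝ) : ℝ := |x - round x|

open Metric

/-!
If `x` is within `σ` of `θ` but fails the `(γ/100, 100τ)` condition at some `k`, then
`‖2θ + kα‖ ≤ ‖2x + kα‖ + 2σ`, which together with `θ ∈ Θ_γ^τ` forces `γ < 4σ(|k|+1)^τ`.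
For such `k` the bad points `x` lie in an interval of length `(γ/100)(|k|+1)^(-100τ)`, and the
lower bound on `|k|` turns this into `O(σ² / (|k|+1)²)`. Summing over `k`, the bad part of
`(θ - σ, θ + σ)` has measure `O(σ²) ≤ σ` for small `σ`.
-/

theorem distZ_le_half (x : ℝ) : distZ x ≤ 1 / 2 := abs_sub_round x

theorem distZ_le_distZ_add_abs_sub (x y : ℝ) : distZ x ≤ distZ y + |x - y| :=
  calc distZ x ≤ |x - round y| := round_le x _
    _ ≤ |x - y| + |y - round y| := abs_sub_le _ _ _
    _ = distZ y + |x - y| := add_comm _ _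

theorem round_eq_of_abs_sub_lt_half {x : ℝ} {m : ℤ} (h : |x - m| < 1 / 2) : round x = m := by
  rw [round_eq_iff]
  rw [abs_lt] at h
  constructor <;> linarith

theorem summable_one_div_abs_add_one_sq :
    Summable fun k : ℤ => 1 / (|(k : ℝ)| + 1) ^ 2 := by
  have h : Summable fun n : ℕ => 1 / ((n : ℝ) + 1) ^ 2 := by
    simpa using (summable_nat_add_iff 1).mpr (Real.summable_one_div_nat_pow.mpr one_lt_two)
  exact .of_nat_of_neg (by simpa using h) (by simpa using h)

theorem div_rpow_le_of_lt_mul_rpow {γ σ τ N : ℝ} (hγ : 0 < γ) (hσ : 0 < σ) (hτ : 1 ≤ τ)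
    (hN : 1 ≤ N) (h : γ < 4 * σ * N ^ τ) :
    γ / N ^ (100 * τ) ≤ 16 * σ ^ 2 / γ / N ^ 2 := by
  have hNpos : 0 < N := by linarith
  have hpow : (N ^ τ) ^ 2 * N ^ 2 ≤ N ^ (100 * τ) :=
    calc (N ^ τ) ^ 2 * N ^ 2 = N ^ (2 * τ + 2) := by
          rw [Real.rpow_add hNpos, ← Real.rpow_natCast, ← Real.rpow_natCast,
            ← Real.rpow_mul hNpos.le, mul_comm τ]
          norm_num
      _ ≤ N ^ (100 * τ) := Real.rpow_le_rpow_of_exponent_le hN (by linarith)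
  have hsq : (γ / (4 * σ)) ^ 2 ≤ (N ^ τ) ^ 2 := by
    gcongr
    rw [div_le_iff₀ (by positivity)]
    linarith
  calc γ / N ^ (100 * τ) ≤ γ / ((N ^ τ) ^ 2 * N ^ 2) :=
        div_le_div_of_nonneg_left hγ.le (by positivity) hpow
    _ ≤ γ / ((γ / (4 * σ)) ^ 2 * N ^ 2) := by gcongr
    _ = 16 * σ ^ 2 / γ / N ^ 2 := by field_simp; ring

theorem le_measure_inter_of_measure_diff_le {Ω : Type*} [MeasurableSpace Ω] {μ : Measure Ω}
    {I S : Set Ω} {a b : ENNReal} (hI : a + b ≤ μ I) (hdiff : μ (I \ S) ≤ b) (hb : b ≠ ⊤) :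
    a ≤ μ (I ∩ S) :=
  (ENNReal.add_le_add_iff_right hb).mp <|
    hI.trans <| (measure_le_inter_add_sdiff μ I S).trans (add_le_add le_rfl hdiff)

theorem mem_closedBall_of_distZ_le {x θ c ε σ : ℝ} (hx : distZ (2 * x + c) ≤ ε)
    (hxθ : |x - θ| < σ) (hsmall : ε + 2 * σ ≤ 1 / 2) :
    x ∈ closedBall ((round (2 * θ + c) - c) / 2) (ε / 2) := by
  set m := round (2 * x + c)
  have hx' : |2 * x + c - m| ≤ ε := hx
  have hθx : |2 * θ + c - (2 * x + c)| < 2 * σ := by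
    rw [show 2 * θ + c - (2 * x + c) = 2 * (x - θ) * -1 by ring, abs_mul, abs_neg, abs_one,
      abs_mul, abs_two]
    linarith
  have hround : round (2 * θ + c) = m := by
    apply round_eq_of_abs_sub_lt_half
    linarith [abs_sub_le (2 * θ + c) (2 * x + c) m]
  rw [hround, mem_closedBall, Real.dist_eq,
    show x - (m - c) / 2 = (2 * x + c - m) / 2 by ring, abs_div, abs_two]
  linarith

/-- The paper's `Θ_γ^τ`, for the fixed frequency `α`. -/
def diophantineSet (α γ τ : ℝ) : Set ℝ :=
  {x | x ∈ Ioo (0 : ℝ) 1 ∧ ∀ k : ℤ, γ / (|(k : ℝ)| + 1) ^ τ < distZ (2 * x + k * α)}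

/-- Only the `k` with `γ < 4σ(|k|+1)^τ` can expel points of `(θ - σ, θ + σ)` from
`Θ_{γ/100}^{100τ}`, and for such `k` these points lie in this ball. -/
noncomputable def resonantBall (α γ τ θ σ : ℝ) (k : ℤ) : Set ℝ :=
  if γ < 4 * σ * (|(k : ℝ)| + 1) ^ τ then
    closedBall ((round (2 * θ + k * α) - k * α) / 2) (γ / 100 / (|(k : ℝ)| + 1) ^ (100 * τ) / 2)
  else ∅

theorem Ioo_diff_diophantineSet_subset_iUnion_resonantBall {α γ τ θ σ : ℝ}
    (hθ : θ ∈ diophantineSet α γ τ) (hγ : 0 < γ) (hτ : 0 ≤ τ) (hσθ : σ ≤ θ) (hσθ' : σ ≤ 1 - θ)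
    (hσ : σ ≤ 1 / 8) :
    Ioo (θ - σ) (θ + σ) \ diophantineSet α (γ / 100) (100 * τ) ⊆
      ⋃ k, resonantBall α γ τ θ σ k := by
  rintro x ⟨⟨hxl, hxr⟩, hxΘ⟩
  have hx01 : x ∈ Ioo (0 : ℝ) 1 := ⟨by linarith, by linarith⟩
  obtain ⟨k, hk⟩ : ∃ k : ℤ, distZ (2 * x + k * α) ≤ γ / 100 / (|(k : ℝ)| + 1) ^ (100 * τ) := by
    simpa [diophantineSet, hx01.1, hx01.2] using hxΘ
  have hxθ : |x - θ| < σ := abs_sub_lt_iff.mpr ⟨by linarith, by linarith⟩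
  set N := |(k : ℝ)| + 1
  have hN : 1 ≤ N := le_add_of_nonneg_left (abs_nonneg _)
  have hNτ : 1 ≤ N ^ τ := Real.one_le_rpow hN hτ
  set g := γ / N ^ τ
  have hg : 0 < g := by positivity
  have hε : γ / 100 / N ^ (100 * τ) ≤ g / 100 := by
    rw [div_right_comm]
    exact div_le_div_of_nonneg_right (div_le_div_of_nonneg_left hγ.le (by positivity)
      (Real.rpow_le_rpow_of_exponent_le hN (by linarith))) (by norm_num)
  have hθk : g < distZ (2 * θ + k * α) := hθ.2 k
  have hnear : distZ (2 * θ + k * α) ≤ γ / 100 / N ^ (100 * τ) + 2 * σ := by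
    have := distZ_le_distZ_add_abs_sub (2 * θ + k * α) (2 * x + k * α)
    rw [show 2 * θ + k * α - (2 * x + k * α) = 2 * (θ - x) by ring, abs_mul, abs_two,
      abs_sub_comm] at this
    linarith
  -- `g < ‖2θ + kα‖ ≤ g / 100 + 2σ` forces `2σ > g / 2`
  have hbig : γ < 4 * σ * N ^ τ := by
    by_contra! hsmall
    have : 4 * σ ≤ g := by rw [le_div_iff₀ (by positivity)]; exact hsmall
    linarith
  have hγ2 : γ < 1 / 2 := by
    simpa using (hθ.2 0).trans_le (distZ_le_half _)
  have hgγ : g ≤ γ := div_le_self hγ.le hNτ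
  refine mem_iUnion.mpr ⟨k, ?_⟩
  rw [resonantBall, if_pos hbig]
  exact mem_closedBall_of_distZ_le hk hxθ (by linarith)

theorem volume_resonantBall_le {α γ τ θ σ : ℝ} (hγ : 0 < γ) (hσ : 0 < σ) (hτ : 1 ≤ τ) (k : ℤ) :
    volume (resonantBall α γ τ θ σ k) ≤
      ENNReal.ofReal (4 * σ ^ 2 / (25 * γ) * (1 / (|(k : ℝ)| + 1) ^ 2)) := by
  rw [resonantBall]
  split_ifs with hbig
  · rw [Real.volume_closedBall]
    apply ENNReal.ofReal_le_ofReal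
    have := div_rpow_le_of_lt_mul_rpow hγ hσ hτ (le_add_of_nonneg_left (abs_nonneg _)) hbig
    calc 2 * (γ / 100 / (|(k : ℝ)| + 1) ^ (100 * τ) / 2)
        = γ / (|(k : ℝ)| + 1) ^ (100 * τ) / 100 := by ring
      _ ≤ 16 * σ ^ 2 / γ / (|(k : ℝ)| + 1) ^ 2 / 100 := by gcongr
      _ = 4 * σ ^ 2 / (25 * γ) * (1 / (|(k : ℝ)| + 1) ^ 2) := by ring
  · simp

theorem volume_iUnion_resonantBall_le {α γ τ θ σ : ℝ} (hγ : 0 < γ) (hσ : 0 < σ) (hτ : 1 ≤ τ)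
    (hσB : 4 * σ * ∑' k : ℤ, 1 / (|(k : ℝ)| + 1) ^ 2 ≤ 25 * γ) :
    volume (⋃ k, resonantBall α γ τ θ σ k) ≤ ENNReal.ofReal σ :=
  calc volume (⋃ k, resonantBall α γ τ θ σ k)
      ≤ ∑' k : ℤ, volume (resonantBall α γ τ θ σ k) := measure_iUnion_le _
    _ ≤ ∑' k : ℤ, ENNReal.ofReal (4 * σ ^ 2 / (25 * γ) * (1 / (|(k : ℝ)| + 1) ^ 2)) :=
        ENNReal.tsum_le_tsum (volume_resonantBall_le hγ hσ hτ)
    _ = ENNReal.ofReal (4 * σ ^ 2 / (25 * γ) * ∑' k : ℤ, 1 / (|(k : ℝ)| + 1) ^ 2) := by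
        rw [← ENNReal.ofReal_tsum_of_nonneg (fun k => by positivity)
          (summable_one_div_abs_add_one_sq.mul_left _), tsum_mul_left]
    _ ≤ ENNReal.ofReal σ := by
        apply ENNReal.ofReal_le_ofReal
        rw [div_mul_eq_mul_div, div_le_iff₀ (by positivity)]
        nlinarith

theorem stmt2_general (α : ℝ) (γ τ θ : ℝ) (hγ : 0 < γ) (hτ : 1 < τ)
    (hθmem : θ ∈ Ioo (0 : ℝ) 1)
    (hθ : ∀ k : ℤ, γ / (|(k : ℝ)| + 1) ^ τ < distZ (2 * θ + k * α)) :
    ∃ σ₀ : ℝ, 0 < σ₀ ∧ ∀ σ : ℝ, 0 < σ → σ < σ₀ →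
      ENNReal.ofReal σ ≤
        volume (Ioo (θ - σ) (θ + σ) ∩
          {x : ℝ | x ∈ Ioo (0 : ℝ) 1 ∧
            ∀ k : ℤ, γ / 100 / (|(k : ℝ)| + 1) ^ (100 * τ) < distZ (2 * x + k * α)}) := by
  set B := ∑' k : ℤ, 1 / (|(k : ℝ)| + 1) ^ 2
  have hB : 0 ≤ B := tsum_nonneg fun k => by positivity
  refine ⟨min (min θ (1 - θ)) (min (1 / 8) (25 * γ / (4 * (B + 1)))),
    lt_min (lt_min hθmem.1 (by linarith [hθmem.2])) (lt_min (by norm_num) (by positivity)),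
    fun σ hσ hσ₀ => ?_⟩
  simp only [lt_min_iff] at hσ₀
  obtain ⟨⟨hσθ, hσθ'⟩, hσ8, hσB⟩ := hσ₀
  have hσB' : 4 * σ * B ≤ 25 * γ := by
    rw [lt_div_iff₀ (by positivity)] at hσB
    nlinarith
  change _ ≤ volume (_ ∩ diophantineSet α (γ / 100) (100 * τ))
  refine le_measure_inter_of_measure_diff_le (b := ENNReal.ofReal σ) ?_ ?_ ENNReal.ofReal_ne_top
  · rw [Real.volume_Ioo, ← ENNReal.ofReal_add hσ.le hσ.le]
    exact ENNReal.ofReal_le_ofReal (by linarith)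
  · exact (measure_mono (Ioo_diff_diophantineSet_subset_iUnion_resonantBall ⟨hθmem, hθ⟩ hγ
      (by linarith) hσθ.le hσθ'.le hσ8.le)).trans
      (volume_iUnion_resonantBall_le hγ hσ hτ.le hσB')

/-- If `θ ∈ Θ_γ^τ`, then `θ` is `Θ_{γ/100}^{100τ}`-homogeneous: for all sufficiently small
`σ > 0`, the measure of `(θ-σ, θ+σ) ∩ Θ_{γ/100}^{100τ}` is at least `σ`. -/
theorem stmt2 (α : ℝ) (hα : Irrational α) (γ τ θ : ℝ) (hγ : 0 < γ) (hτ : 1 < τ)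
    (hθmem : θ ∈ Ioo (0 : ℝ) 1)
    (hθ : ∀ k : ℤ, γ / (|(k : ℝ)| + 1) ^ τ < distZ (2 * θ + k * α)) :
    ∃ σ₀ : ℝ, 0 < σ₀ ∧ ∀ σ : ℝ, 0 < σ → σ < σ₀ →
      ENNReal.ofReal σ ≤
        volume (Ioo (θ - σ) (θ + σ) ∩
          {x : ℝ | x ∈ Ioo (0 : ℝ) 1 ∧
            ∀ k : ℤ, γ / 100 / (|(k : ℝ)| + 1) ^ (100 * τ) < distZ (2 * x + k * α)}) :=
  stmt2_general α γ τ θ hγ hτ hθmem hθ
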